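/- Let S be a finite collection of functions stat: T_W → Ω_stat into finite sets (finite statistics), let 0 ≤ δ < 1 and J ∈ ℕ. Then there exists a finite set Ω, a height-preserving order-preserving map D: T_W → T_Ω, and a constant M = 2J/(1−δ) ≥ 1 such that for all pairs of sentences α = u₁…u_p u_{p+1}…u_{p+m} and β = u₁…u_p u'_{p+1}…u'_{p+n} (with u_{p+1} ≠ u'_{p+1}) satisfying the Aries condition — there exist 1 ≤ j ≤ δ·min(m,n) + J and stat ∈ S with stat(u₁…u_{p+j}) ≠ stat(u₁…u_p u'_{p+1}…u'_{p+j}) — one has (1/M)·d_{T_W}(α,β) ≤ d_{T_Ω}(Dα, Dβ) ≤ d_{T_W}(α,β). -/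

import Mathlib

/-- Length of the longest common prefix of two lists. -/
def lcpLen {A : Type*} [DecidableEq A] : List A → List A → ℕ
  | a :: as, b :: bs => if a = b then lcpLen as bs + 1 else 0
  | _, _ => 0

/-- The rooted-tree metric on finite sequences. -/
def treeDist {A : Type*} [DecidableEq A] (u v : List A) : ℕ :=
  u.length + v.length - 2 * lcpLen u v

lemma lcpLen_le_left {A : Type*} [DecidableEq A] : ∀ u v : List A, lcpLen u v ≤ u.length
  | [], _ => by simp [lcpLen]
  | _ :: _, [] => by simp [lcpLen]
  | a :: as, b :: bs => by
      by_cases h : a = b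
      · simp only [lcpLen, if_pos h, List.length_cons]
        exact Nat.succ_le_succ (lcpLen_le_left as bs)
      · simp [lcpLen, h]

lemma lcpLen_le_right {A : Type*} [DecidableEq A] : ∀ u v : List A, lcpLen u v ≤ v.length
  | [], _ => by simp [lcpLen]
  | _ :: _, [] => by simp [lcpLen]
  | a :: as, b :: bs => by
      by_cases h : a = b
      · simp only [lcpLen, if_pos h, List.length_cons]
        exact Nat.succ_le_succ (lcpLen_le_right as bs)
      · simp [lcpLen, h]

lemma lcpLen_append {A : Type*} [DecidableEq A] :
    ∀ (p u v : List A), lcpLen (p ++ u) (p ++ v) = p.length + lcpLen u v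
  | [], u, v => by simp
  | a :: p, u, v => by
      have ih := lcpLen_append p u v
      simp only [List.cons_append, lcpLen, if_pos rfl, if_true, List.length_cons,
        List.append_eq] at ih ⊢
      omega

lemma lcpLen_le_of_getElem? {A : Type*} [DecidableEq A] :
    ∀ (u v : List A) (k : ℕ), u[k]? ≠ v[k]? → lcpLen u v ≤ k
  | [], v, k, h => by simp [lcpLen]
  | _ :: _, [], k, h => by simp [lcpLen]
  | a :: as, b :: bs, 0, h => by
      by_cases hab : a = b
      · subst hab; simp at h
      · simp [lcpLen, hab]
  | a :: as, b :: bs, k + 1, h => by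
      by_cases hab : a = b
      · simp only [lcpLen, if_pos hab]
        exact Nat.succ_le_succ (lcpLen_le_of_getElem? as bs k (by simpa using h))
      · simp [lcpLen, hab]

lemma le_lcpLen_of_prefix {A : Type*} [DecidableEq A] {p u v : List A}
    (hu : p <+: u) (hv : p <+: v) : p.length ≤ lcpLen u v := by
  obtain ⟨u', rfl⟩ := hu
  obtain ⟨v', rfl⟩ := hv
  rw [lcpLen_append]
  omega

lemma keyE (δ J s t k j : ℝ) (h0 : 0 ≤ δ) (h1 : δ < 1) (hJ : 1 ≤ J)
    (hk1 : 1 ≤ k) (hkj : k ≤ j) (hkt : k ≤ t) (h2t : 2 * t ≤ s)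
    (hjb : j ≤ δ * t + J) : (1 - δ) * s ≤ 2 * J * (s - 2 * k + 2) := by
  nlinarith [mul_nonneg (by linarith : (0:ℝ) ≤ 2 * J - 1) (by linarith : (0:ℝ) ≤ s - 2 * k),
    mul_le_mul_of_nonneg_left h2t h0,
    mul_le_mul_of_nonneg_left hkt h0]

lemma keyU (δ J m n : ℝ) (h0 : 0 ≤ δ) (h1 : δ < 1) (hJ : 1 ≤ J)
    (hm : 0 ≤ m) (hmn : m + 1 ≤ n) (hj : m + 1 ≤ δ * m + J) :
    (1 - δ) * (m + n) ≤ 2 * J * (n - m) := by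
  nlinarith [mul_nonneg (by linarith : (0:ℝ) ≤ 2 * J - 1) (by linarith : (0:ℝ) ≤ n - m - 1),
    mul_nonneg h0 (by linarith : (0:ℝ) ≤ n - m - 1)]

/-- Aries theorem: given a finite collection of finite statistics on the
sentence-tree `T_W` (W = nonempty words on a finite alphabet A), 0 ≤ δ < 1 and J ∈ ℕ,
there is a finite set Ω, a diary D : T_W → T_Ω (height- and order-preserving), and the
constant M = 2J/(1−δ), such that for every pair of sentences
α = pre ++ (u_{p+1}…u_{p+m}), β = pre ++ (u'_{p+1}…u'_{p+n}) with u_{p+1} ≠ u'_{p+1}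
satisfying the Aries condition, (1/M)·d(α,β) ≤ d(Dα,Dβ) ≤ d(α,β). -/
theorem stmt_6 {A : Type*} [DecidableEq A] [Fintype A]
    {ι : Type*} [Fintype ι] (Ωs : ι → Type) [∀ i, Fintype (Ωs i)]
    (stat : ∀ i : ι, List {w : List A // w ≠ []} → Ωs i)
    (δ : ℝ) (hδ0 : 0 ≤ δ) (hδ1 : δ < 1) (J : ℕ) (hJ : 1 ≤ J) :
    ∃ (Ω : Type) (_ : Fintype Ω) (_ : DecidableEq Ω)
      (D : List {w : List A // w ≠ []} → List Ω) (M : ℝ),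
      M = 2 * J / (1 - δ) ∧
      (∀ α, (D α).length = α.length) ∧
      (∀ α β, α <+: β → D α <+: D β) ∧
      (∀ pre a b : List {w : List A // w ≠ []},
        a ≠ [] → b ≠ [] → a.head? ≠ b.head? →
        (∃ j : ℕ, 1 ≤ j ∧ (j : ℝ) ≤ δ * min a.length b.length + J ∧
          ∃ i : ι, stat i (pre ++ a.take j) ≠ stat i (pre ++ b.take j)) →
        (treeDist (pre ++ a) (pre ++ b) : ℝ) / M
            ≤ (treeDist (D (pre ++ a)) (D (pre ++ b)) : ℝ) ∧
        (treeDist (D (pre ++ a)) (D (pre ++ b)) : ℝ)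
            ≤ (treeDist (pre ++ a) (pre ++ b) : ℝ)) := by
  classical
  set e := Fintype.equivFin ι with he
  let D : List {w : List A // w ≠ []} → List (∀ c : Fin (Fintype.card ι), Ωs (e.symm c)) :=
    fun α => (List.range α.length).map (fun k => fun c => stat (e.symm c) (α.take (k + 1)))
  have hlen : ∀ α, (D α).length = α.length := by intro α; simp [D]
  have hget : ∀ (γ : List {w : List A // w ≠ []}) (k : ℕ), k < γ.length →
      (D γ)[k]? = some (fun c => stat (e.symm c) (γ.take (k + 1))) := by
    intro γ k hk
    simp [D, List.getElem?_range, hk]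
  have hpref : ∀ α β : List {w : List A // w ≠ []}, α <+: β → D α <+: D β := by
    rintro α β ⟨γ, rfl⟩
    have h1 : D (α ++ γ) = D α ++ (((List.range γ.length).map (α.length + ·)).map
        (fun k => fun c => stat (e.symm c) ((α ++ γ).take (k + 1)))) := by
      simp only [D, List.length_append, List.range_add, List.map_append]
      congr 1
      apply List.map_congr_left
      intro k hk
      rw [List.mem_range] at hk
      have h2 : (α ++ γ).take (k + 1) = α.take (k + 1) :=
        List.take_append_of_le_length (by omega)
      rw [h2]
    rw [h1]; exact List.prefix_append _ _
  have hJ' : (1:ℝ) ≤ (J:ℝ) := by exact_mod_cast hJ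
  have h1δ : (0:ℝ) < 1 - δ := by linarith
  have hM0 : (0:ℝ) < 2 * J / (1 - δ) := by positivity
  refine ⟨∀ c : Fin (Fintype.card ι), Ωs (e.symm c), inferInstance, inferInstance, D, 2 * J / (1 - δ), rfl, hlen, hpref, ?_⟩
  rintro pre a b ha hb hhead ⟨j, hj1, hjb, i, hstat⟩
  have h0ab : lcpLen a b = 0 := by
    obtain ⟨x, as, rfl⟩ := List.exists_cons_of_ne_nil ha
    obtain ⟨y, bs, rfl⟩ := List.exists_cons_of_ne_nil hb
    have hxy : x ≠ y := by simpa using hhead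
    simp [lcpLen, hxy]
  have hm1 : 1 ≤ a.length := List.length_pos_iff.mpr ha
  have hn1 : 1 ≤ b.length := List.length_pos_iff.mpr hb
  set p := pre.length with hp
  set m := a.length with hmdef
  set n := b.length with hndef
  have hdab : treeDist (pre ++ a) (pre ++ b) = m + n := by
    simp only [treeDist, lcpLen_append, h0ab, List.length_append]
    omega
  have hlenDα : (D (pre ++ a)).length = p + m := by rw [hlen]; simp; rfl
  have hlenDβ : (D (pre ++ b)).length = p + n := by rw [hlen]; simp; rfl
  set L := lcpLen (D (pre ++ a)) (D (pre ++ b)) with hL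
  have hLp : p ≤ L := by
    have h1 := le_lcpLen_of_prefix (hpref pre (pre ++ a) (List.prefix_append _ _))
      (hpref pre (pre ++ b) (List.prefix_append _ _))
    rwa [hlen] at h1
  have hLm : L ≤ p + m := by
    have := lcpLen_le_left (D (pre ++ a)) (D (pre ++ b)); rwa [hlenDα] at this
  have hLn : L ≤ p + n := by
    have := lcpLen_le_right (D (pre ++ a)) (D (pre ++ b)); rwa [hlenDβ] at this
  have hDd : treeDist (D (pre ++ a)) (D (pre ++ b)) = (p + m) + (p + n) - 2 * L := by
    rw [treeDist, hlenDα, hlenDβ]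
  constructor
  swap
  · -- upper bound
    have : treeDist (D (pre ++ a)) (D (pre ++ b)) ≤ treeDist (pre ++ a) (pre ++ b) := by
      rw [hdab, hDd]; omega
    exact_mod_cast this
  -- lower bound
  have hjb' : (j:ℝ) ≤ δ * min (m:ℝ) (n:ℝ) + J := by
    rw [← Nat.cast_min]; exact_mod_cast hjb
  have h2t : 2 * min (m:ℝ) (n:ℝ) ≤ (m:ℝ) + n := by
    rcases le_total (m:ℝ) n with h | h
    · rw [min_eq_left h]; linarith
    · rw [min_eq_right h]; linarith
  have finish : ∀ hX : (1 - δ) * ((m:ℝ) + n) ≤ 2 * J *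
      (treeDist (D (pre ++ a)) (D (pre ++ b)) : ℝ),
      (treeDist (pre ++ a) (pre ++ b) : ℝ) / (2 * J / (1 - δ))
        ≤ (treeDist (D (pre ++ a)) (D (pre ++ b)) : ℝ) := by
    intro hX
    rw [hdab, div_le_iff₀ hM0]
    rw [show ((treeDist (D (pre ++ a)) (D (pre ++ b)) : ℕ) : ℝ) * (2 * J / (1 - δ))
        = (treeDist (D (pre ++ a)) (D (pre ++ b)) : ℝ) * (2 * J) / (1 - δ) by ring]
    rw [le_div_iff₀ h1δ]
    push_cast
    linarith [hX]
  by_cases hE : min j m = min j n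
  · -- equal truncation case
    set k0 := min j (min m n) with hk0
    have hk01 : 1 ≤ k0 := by omega
    have hk0m : k0 ≤ m := by omega
    have hk0n : k0 ≤ n := by omega
    have htakea : a.take j = a.take k0 := by
      rw [List.take_eq_take_iff]; omega
    have htakeb : b.take j = b.take k0 := by
      rw [List.take_eq_take_iff]; omega
    have htka : (pre ++ a).take (p + k0) = pre ++ a.take j := by
      rw [List.take_append, List.take_of_length_le (by omega),
        htakea]
      congr 2
      omega
    have htkb : (pre ++ b).take (p + k0) = pre ++ b.take j := by
      rw [List.take_append, List.take_of_length_le (by omega),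
        htakeb]
      congr 2
      omega
    have hga : (D (pre ++ a))[p + k0 - 1]? = some (fun c => stat (e.symm c) (pre ++ a.take j)) := by
      rw [hget (pre ++ a) (p + k0 - 1) (by simp; omega)]
      rw [show p + k0 - 1 + 1 = p + k0 by omega, htka]
    have hgb : (D (pre ++ b))[p + k0 - 1]? = some (fun c => stat (e.symm c) (pre ++ b.take j)) := by
      rw [hget (pre ++ b) (p + k0 - 1) (by simp; omega)]
      rw [show p + k0 - 1 + 1 = p + k0 by omega, htkb]
    have hne : (D (pre ++ a))[p + k0 - 1]? ≠ (D (pre ++ b))[p + k0 - 1]? := by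
      rw [hga, hgb]
      intro h
      have h2 := congrFun (Option.some.inj h) (e i)
      rw [Equiv.symm_apply_apply] at h2
      exact hstat h2
    have hLk : L ≤ p + k0 - 1 := lcpLen_le_of_getElem? _ _ _ hne
    have hXnat : m + n + 2 ≤ treeDist (D (pre ++ a)) (D (pre ++ b)) + 2 * k0 := by
      rw [hDd]; omega
    apply finish
    have hX' : ((m:ℝ) + n) - 2 * k0 + 2 ≤ (treeDist (D (pre ++ a)) (D (pre ++ b)) : ℝ) := by
      have := hXnat
      have h2 : ((m + n + 2 : ℕ) : ℝ) ≤ ((treeDist (D (pre ++ a)) (D (pre ++ b)) + 2 * k0 : ℕ) : ℝ) := by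
        exact_mod_cast this
      push_cast at h2
      linarith
    have hk0t : (k0:ℝ) ≤ min (m:ℝ) (n:ℝ) := by
      rw [← Nat.cast_min]; exact_mod_cast (by omega : k0 ≤ min m n)
    have hkey := keyE δ J ((m:ℝ) + n) (min (m:ℝ) (n:ℝ)) k0 j hδ0 hδ1 hJ'
      (by exact_mod_cast hk01) (by exact_mod_cast (by omega : k0 ≤ j)) hk0t h2t hjb'
    have hmul := mul_le_mul_of_nonneg_left hX' (by positivity : (0:ℝ) ≤ 2 * (J:ℝ))
    linarith [hkey, hmul]
  · -- unequal truncation case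
    have hmn : m ≠ n := by omega
    have htj : min m n < j := by omega
    rcases Nat.lt_or_ge m n with hlt | hge
    · -- m < n
      have hXnat : m + n ≤ treeDist (D (pre ++ a)) (D (pre ++ b)) + 2 * m := by
        rw [hDd]; omega
      have hminr : min (m:ℝ) (n:ℝ) = (m:ℝ) := by
        rw [min_eq_left]; exact_mod_cast hlt.le
      have hj2 : (m:ℝ) + 1 ≤ δ * m + J := by
        have h1 : ((m + 1 : ℕ) : ℝ) ≤ (j:ℝ) := by exact_mod_cast (by omega : m + 1 ≤ j)
        push_cast at h1
        rw [hminr] at hjb'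
        linarith
      have hkey := keyU δ J (m:ℝ) (n:ℝ) hδ0 hδ1 hJ' (by positivity)
        (by exact_mod_cast (by omega : m + 1 ≤ n)) hj2
      apply finish
      have hX' : ((n:ℝ) - m) ≤ (treeDist (D (pre ++ a)) (D (pre ++ b)) : ℝ) := by
        have h2 : ((m + n : ℕ) : ℝ) ≤ ((treeDist (D (pre ++ a)) (D (pre ++ b)) + 2 * m : ℕ) : ℝ) := by
          exact_mod_cast hXnat
        push_cast at h2
        linarith
      have hmul := mul_le_mul_of_nonneg_left hX' (by positivity : (0:ℝ) ≤ 2 * (J:ℝ))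
      linarith [hkey, hmul]
    · -- n < m
      have hlt : n < m := by omega
      have hXnat : m + n ≤ treeDist (D (pre ++ a)) (D (pre ++ b)) + 2 * n := by
        rw [hDd]; omega
      have hminr : min (m:ℝ) (n:ℝ) = (n:ℝ) := by
        rw [min_eq_right]; exact_mod_cast hlt.le
      have hj2 : (n:ℝ) + 1 ≤ δ * n + J := by
        have h1 : ((n + 1 : ℕ) : ℝ) ≤ (j:ℝ) := by exact_mod_cast (by omega : n + 1 ≤ j)
        push_cast at h1
        rw [hminr] at hjb'
        linarith
      have hkey := keyU δ J (n:ℝ) (m:ℝ) hδ0 hδ1 hJ' (by positivity)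
        (by exact_mod_cast (by omega : n + 1 ≤ m)) hj2
      apply finish
      have hX' : ((m:ℝ) - n) ≤ (treeDist (D (pre ++ a)) (D (pre ++ b)) : ℝ) := by
        have h2 : ((m + n : ℕ) : ℝ) ≤ ((treeDist (D (pre ++ a)) (D (pre ++ b)) + 2 * n : ℕ) : ℝ) := by
          exact_mod_cast hXnat
        push_cast at h2
        linarith
      have hmul := mul_le_mul_of_nonneg_left hX' (by positivity : (0:ℝ) ≤ 2 * (J:ℝ))
      linarith [hkey, hmul]
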